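/- arXiv:2507.19632 — 3 statements merged into one kernel-verified Lean document; each statement's English description precedes it below -/
import Mathlib

section
/- (Union property of degree balance preserving directed spectral approximation.) Let G⃗, G⃗_1, …, G⃗_k be weighted directed graphs on a common vertex set V, and let s_1, …, s_k ≥ 0 be scalars such that G⃗ = ∪_{i=1}^k s_i·G⃗_i, i.e., L⃗_G = Σ_{i=1}^k s_i L⃗_{G_i} and L_G = Σ_{i=1}^k s_i L_{G_i}. Suppose that for every i ∈ [k], G⃗'_i is an ε-degree balance preserving directed spectral approximation of G⃗_i, i.e., for all x, y ∈ ℝ^V, |xᵀ (L⃗_{G_i} − L⃗_{G'_i}) y| ≤ ε·√((xᵀ L_{G_i} x)·(yᵀ L_{G_i} y)). Then ∪_{i=1}^k s_i·G⃗'_i (the graph with directed Laplacian Σ_i s_i L⃗_{G'_i}) is an ε-degree balance preserving directed spectral approximation of G⃗: for all x, y ∈ ℝ^V, |xᵀ (L⃗_G − Σ_i s_i L⃗_{G'_i}) y| ≤ ε·√((xᵀ L_G x)·(yᵀ L_G y)). -/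
open Matrix BigOperators

noncomputable section

/-- The 0/1 indicator matrix of a map from (edge) indices to vertices:
row `e` is the indicator of the vertex `f e`. -/
def indMat {E V : Type*} [DecidableEq V] (f : E → V) : Matrix E V ℝ :=
  Matrix.of fun e v => if f e = v then (1 : ℝ) else 0

/-- The edge–vertex transfer matrix `B = H - T` of a directed graph with head map `hd`
and tail map `tl`. -/
def transMat {E V : Type*} [DecidableEq V] (hd tl : E → V) : Matrix E V ℝ :=
  indMat hd - indMat tl

/-- The directed Laplacian `Bᵀ W H`. -/
def dirLap {E V : Type*} [Fintype E] [DecidableEq E] [DecidableEq V]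
    (hd tl : E → V) (w : E → ℝ) : Matrix V V ℝ :=
  (transMat hd tl)ᵀ * Matrix.diagonal w * indMat hd

/-- The undirected Laplacian `Bᵀ W B` of the corresponding undirected graph. -/
def undLap {E V : Type*} [Fintype E] [DecidableEq E] [DecidableEq V]
    (hd tl : E → V) (w : E → ℝ) : Matrix V V ℝ :=
  (transMat hd tl)ᵀ * Matrix.diagonal w * transMat hd tl

/-- The corresponding undirected (simple) graph of a weighted directed graph:
`u ~ v` iff `u ≠ v` and some edge of positive weight joins them (in either direction). -/
def undSG {E V : Type*} (hd tl : E → V) (w : E → ℝ) : SimpleGraph V :=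
  SimpleGraph.fromRel (fun u v => ∃ e, 0 < w e ∧ hd e = u ∧ tl e = v)

/-- Directed Laplacian for a graph whose edges are indexed by pairs of vertices. -/
def dirLapP {V : Type*} [Fintype V] [DecidableEq V] (w : V × V → ℝ) : Matrix V V ℝ :=
  dirLap Prod.fst Prod.snd w

/-- Undirected Laplacian for a graph whose edges are indexed by pairs of vertices. -/
def undLapP {V : Type*} [Fintype V] [DecidableEq V] (w : V × V → ℝ) : Matrix V V ℝ :=
  undLap Prod.fst Prod.snd w

/-- Corresponding undirected graph for edges indexed by pairs of vertices. -/
def undSGP {V : Type*} (w : V × V → ℝ) : SimpleGraph V :=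
  undSG Prod.fst Prod.snd w

/-- `B` is a Moore–Penrose pseudoinverse of `A`. -/
def IsMPInv {V : Type*} [Fintype V] (A B : Matrix V V ℝ) : Prop :=
  A * B * A = A ∧ B * A * B = B ∧ (A * B)ᵀ = A * B ∧ (B * A)ᵀ = B * A

open Classical in
/-- The Moore–Penrose pseudoinverse of a (square, real) matrix. -/
noncomputable def mpinv {V : Type*} [Fintype V] (A : Matrix V V ℝ) : Matrix V V ℝ :=
  if h : ∃ B, IsMPInv A B then h.choose else 0

open Classical in
/-- The PSD square root of a positive semidefinite matrix (junk value `0` otherwise). -/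
noncomputable def psdSqrt {V : Type*} [Fintype V] [DecidableEq V] (A : Matrix V V ℝ) :
    Matrix V V ℝ :=
  if h : A.PosSemidef then
    (h.1.eigenvectorUnitary : Matrix V V ℝ) *
      Matrix.diagonal (fun i => Real.sqrt (h.1.eigenvalues i)) *
      (star h.1.eigenvectorUnitary : Matrix V V ℝ)
  else 0

/-- `A^{†/2} = (A†)^{1/2} = (A^{1/2})†` for a PSD matrix `A`. -/
noncomputable def pinvSqrt {V : Type*} [Fintype V] [DecidableEq V] (A : Matrix V V ℝ) :
    Matrix V V ℝ :=
  mpinv (psdSqrt A)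

/-- The ℓ₂→ℓ₂ (spectral) operator norm of `A` is at most `c`. -/
def l2OpNormLE {m n : Type*} [Fintype m] [Fintype n] (A : Matrix m n ℝ) (c : ℝ) : Prop :=
  ∀ (x : m → ℝ) (y : n → ℝ),
    |x ⬝ᵥ A.mulVec y| ≤ c * Real.sqrt (∑ i, x i ^ 2) * Real.sqrt (∑ j, y j ^ 2)

/-- `|xᵀ A y| ≤ ε √((xᵀ L x)(yᵀ L y))` for all vectors `x, y`. -/
def bilinApprox {V : Type*} [Fintype V] (A L : Matrix V V ℝ) (ε : ℝ) : Prop :=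
  ∀ x y : V → ℝ,
    |x ⬝ᵥ A.mulVec y| ≤ ε * Real.sqrt ((x ⬝ᵥ L.mulVec x) * (y ⬝ᵥ L.mulVec y))

/-- Schur complement of a `(V ⊕ X) × (V ⊕ X)` matrix onto the `V`-block. -/
def schurInl {V X : Type*} [Fintype V] [Fintype X] (A : Matrix (V ⊕ X) (V ⊕ X) ℝ) :
    Matrix V V ℝ :=
  A.submatrix Sum.inl Sum.inl -
    A.submatrix Sum.inl Sum.inr * mpinv (A.submatrix Sum.inr Sum.inr) *
      A.submatrix Sum.inr Sum.inl

lemma diag_sum_aux {E : Type*} [Fintype E] [DecidableEq E] {k : ℕ} (s : Fin k → ℝ)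
    (w : Fin k → E → ℝ) :
    Matrix.diagonal (fun e => ∑ i, s i * w i e) = ∑ i, s i • Matrix.diagonal (w i) := by
  ext e f
  by_cases h : e = f <;>
    simp [Matrix.diagonal, h, Matrix.sum_apply]

lemma dirLapP_sum_aux {V : Type*} [Fintype V] [DecidableEq V] {k : ℕ} (s : Fin k → ℝ)
    (w : Fin k → V × V → ℝ) :
    dirLapP (fun e => ∑ i, s i * w i e) = ∑ i, s i • dirLapP (w i) := by
  unfold dirLapP dirLap
  rw [diag_sum_aux]
  simp [Matrix.mul_sum, Matrix.sum_mul, Matrix.mul_smul, Matrix.smul_mul]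

lemma undLapP_sum_aux {V : Type*} [Fintype V] [DecidableEq V] {k : ℕ} (s : Fin k → ℝ)
    (w : Fin k → V × V → ℝ) :
    undLapP (fun e => ∑ i, s i * w i e) = ∑ i, s i • undLapP (w i) := by
  unfold undLapP undLap
  rw [diag_sum_aux]
  simp [Matrix.mul_sum, Matrix.sum_mul, Matrix.mul_smul, Matrix.smul_mul]

/-- The bilinear form `M ↦ xᵀ M y` as a linear map in `M`. -/
noncomputable def bilinLM {V : Type*} [Fintype V] (x y : V → ℝ) :
    Matrix V V ℝ →ₗ[ℝ] ℝ where
  toFun M := x ⬝ᵥ M.mulVec y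
  map_add' M N := by simp [Matrix.add_mulVec, dotProduct_add]
  map_smul' c M := by simp [Matrix.smul_mulVec]

lemma bilin_sum_smul {V : Type*} [Fintype V] {k : ℕ} (s : Fin k → ℝ)
    (A : Fin k → Matrix V V ℝ) (x y : V → ℝ) :
    x ⬝ᵥ (∑ i, s i • A i).mulVec y = ∑ i, s i * (x ⬝ᵥ (A i).mulVec y) := by
  have : x ⬝ᵥ (∑ i, s i • A i).mulVec y = bilinLM x y (∑ i, s i • A i) := rfl
  rw [this, map_sum]
  exact Finset.sum_congr rfl fun i _ => by simp [bilinLM, Matrix.smul_mulVec]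

lemma undLapP_qf_nonneg {V : Type*} [Fintype V] [DecidableEq V]
    (w : V × V → ℝ) (hw : ∀ e, 0 ≤ w e) (x : V → ℝ) :
    0 ≤ x ⬝ᵥ (undLapP w).mulVec x := by
  unfold undLapP undLap
  set M := transMat (Prod.fst : V × V → V) Prod.snd with hM
  have h1 : (Mᵀ * Matrix.diagonal w * M).mulVec x
      = Mᵀ.mulVec ((Matrix.diagonal w).mulVec (M.mulVec x)) := by
    rw [Matrix.mulVec_mulVec, Matrix.mulVec_mulVec]
  rw [h1, Matrix.dotProduct_mulVec, Matrix.vecMul_transpose]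
  have h2 : ∀ u : V × V → ℝ, u ⬝ᵥ (Matrix.diagonal w).mulVec u = ∑ e, w e * u e ^ 2 := by
    intro u
    simp [dotProduct, Matrix.mulVec_diagonal]
    congr 1; ext e; ring
  rw [h2]
  exact Finset.sum_nonneg fun e _ => mul_nonneg (hw e) (sq_nonneg _)

/-- union property of degree balance preserving directed spectral
approximation. -/
theorem stmt_3 {V : Type*} [Fintype V] [DecidableEq V] (k : ℕ)
    (s : Fin k → ℝ) (hs : ∀ i, 0 ≤ s i)
    (w w' : Fin k → V × V → ℝ)
    (hw : ∀ i e, 0 ≤ w i e) (hw' : ∀ i e, 0 ≤ w' i e)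
    (ε : ℝ)
    (happrox : ∀ i, bilinApprox (dirLapP (w i) - dirLapP (w' i)) (undLapP (w i)) ε) :
    bilinApprox
      (dirLapP (fun e => ∑ i, s i * w i e) - dirLapP (fun e => ∑ i, s i * w' i e))
      (undLapP (fun e => ∑ i, s i * w i e)) ε := by
  intro x y
  set a : Fin k → ℝ := fun i => x ⬝ᵥ (undLapP (w i)).mulVec x with ha_def
  set b : Fin k → ℝ := fun i => y ⬝ᵥ (undLapP (w i)).mulVec y with hb_def
  have ha : ∀ i, 0 ≤ a i := fun i => undLapP_qf_nonneg (w i) (hw i) x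
  have hb : ∀ i, 0 ≤ b i := fun i => undLapP_qf_nonneg (w i) (hw i) y
  have hL : x ⬝ᵥ (dirLapP (fun e => ∑ i, s i * w i e)
      - dirLapP (fun e => ∑ i, s i * w' i e)).mulVec y
      = ∑ i, s i * (x ⬝ᵥ (dirLapP (w i) - dirLapP (w' i)).mulVec y) := by
    rw [dirLapP_sum_aux, dirLapP_sum_aux]
    rw [Matrix.sub_mulVec, dotProduct_sub, bilin_sum_smul, bilin_sum_smul,
      ← Finset.sum_sub_distrib]
    refine Finset.sum_congr rfl fun i _ => ?_
    rw [Matrix.sub_mulVec, dotProduct_sub, mul_sub]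
  have hQx : x ⬝ᵥ (undLapP (fun e => ∑ i, s i * w i e)).mulVec x = ∑ i, s i * a i := by
    rw [undLapP_sum_aux, bilin_sum_smul]
  have hQy : y ⬝ᵥ (undLapP (fun e => ∑ i, s i * w i e)).mulVec y = ∑ i, s i * b i := by
    rw [undLapP_sum_aux, bilin_sum_smul]
  rw [hL, hQx, hQy]
  have step1 : |∑ i, s i * (x ⬝ᵥ (dirLapP (w i) - dirLapP (w' i)).mulVec y)|
      ≤ ∑ i, s i * (ε * Real.sqrt (a i * b i)) := by
    refine (Finset.abs_sum_le_sum_abs _ _).trans (Finset.sum_le_sum fun i _ => ?_)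
    rw [abs_mul, abs_of_nonneg (hs i)]
    exact mul_le_mul_of_nonneg_left (happrox i x y) (hs i)
  rcases le_or_gt 0 ε with hε | hε
  · refine step1.trans ?_
    have : ∑ i, s i * (ε * Real.sqrt (a i * b i))
        = ε * ∑ i, Real.sqrt (s i * a i) * Real.sqrt (s i * b i) := by
      rw [Finset.mul_sum]
      refine Finset.sum_congr rfl fun i _ => ?_
      rw [Real.sqrt_mul (hs i), Real.sqrt_mul (hs i), Real.sqrt_mul (ha i)]
      have h2 : Real.sqrt (s i) * Real.sqrt (s i) = s i := Real.mul_self_sqrt (hs i)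
      linear_combination (-(ε * Real.sqrt (a i) * Real.sqrt (b i))) * h2
    rw [this, Real.sqrt_mul (Finset.sum_nonneg fun i _ => mul_nonneg (hs i) (ha i))]
    exact mul_le_mul_of_nonneg_left
      (Real.sum_sqrt_mul_sqrt_le _ (fun i => mul_nonneg (hs i) (ha i))
        (fun i => mul_nonneg (hs i) (hb i))) hε
  · -- ε < 0 forces all quadratic forms to vanish
    have hab : ∀ i, a i = 0 ∧ b i = 0 := by
      intro i
      have h1 := happrox i x x
      have h2 := happrox i y y
      rw [Real.sqrt_mul_self (ha i)] at h1
      rw [Real.sqrt_mul_self (hb i)] at h2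
      constructor
      · nlinarith [abs_nonneg (x ⬝ᵥ (dirLapP (w i) - dirLapP (w' i)).mulVec x), ha i]
      · nlinarith [abs_nonneg (y ⬝ᵥ (dirLapP (w i) - dirLapP (w' i)).mulVec y), hb i]
    have hza : (∑ i, s i * a i) = 0 := by
      refine Finset.sum_eq_zero fun i _ => by rw [(hab i).1, mul_zero]
    have hzb : (∑ i, s i * b i) = 0 := by
      refine Finset.sum_eq_zero fun i _ => by rw [(hab i).2, mul_zero]
    have hzero : ∀ i, s i * (ε * Real.sqrt (a i * b i)) = 0 := by
      intro i; rw [(hab i).1, zero_mul, Real.sqrt_zero, mul_zero, mul_zero]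
    calc |∑ i, s i * (x ⬝ᵥ (dirLapP (w i) - dirLapP (w' i)).mulVec y)|
        ≤ ∑ i, s i * (ε * Real.sqrt (a i * b i)) := step1
      _ = 0 := Finset.sum_eq_zero fun i _ => hzero i
      _ = ε * Real.sqrt ((∑ i, s i * a i) * (∑ i, s i * b i)) := by
          rw [hza, hzb, zero_mul, Real.sqrt_zero, mul_zero]

end
end

section
/- (Contraction property.) Let G⃗ = (V, E, w) and H⃗ = (V, E', w') be weighted directed graphs on a finite vertex set V, and suppose H⃗ is an ε-degree balance preserving directed spectral approximation of G⃗, i.e., for all x, y ∈ ℝ^V, |xᵀ (L⃗_G − L⃗_H) y| ≤ ε·√((xᵀ L_G x)·(yᵀ L_G y)). Let W ⊆ V, let V' = (V ∖ W) ∪ {w₀} with w₀ a new vertex, and let Q ∈ {0,1}^{V×V'} be the quotient matrix of the map sending each v ∈ V ∖ W to itself and each vertex of W to w₀ (Q_{v,c} = 1 iff v maps to class c). Let G⃗' and H⃗' be the graphs obtained by contracting W in G⃗ and H⃗ respectively, so that L⃗_{G'} = Qᵀ L⃗_G Q, L⃗_{H'} = Qᵀ L⃗_H Q, and L_{G'}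 = Qᵀ L_G Q. Then H⃗' is an ε-degree balance preserving directed spectral approximation of G⃗': for all x, y ∈ ℝ^{V'}, |xᵀ (L⃗_{G'} − L⃗_{H'}) y| ≤ ε·√((xᵀ L_{G'} x)·(yᵀ L_{G'} y)). -/
open Matrix BigOperators

noncomputable section

open Classical in
/-- The 0/1 quotient matrix of the map contracting a subset `W` of vertices to a single
new vertex (the `none` vertex of `Option {v // v ∉ W}`). -/
noncomputable def quotMat {V : Type*} [Fintype V] [DecidableEq V] (W : Finset V) :
    Matrix V (Option {v : V // v ∉ W}) ℝ :=
  Matrix.of fun v c =>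
    if (if h : v ∈ W then (none : Option {v : V // v ∉ W}) else some ⟨v, h⟩) = c then 1 else 0

/-- contraction property of degree balance preserving directed spectral
approximation. -/
theorem stmt_4 {V : Type*} [Fintype V] [DecidableEq V]
    (w w' : V × V → ℝ) (hw : ∀ e, 0 ≤ w e) (hw' : ∀ e, 0 ≤ w' e)
    (ε : ℝ)
    (happrox : bilinApprox (dirLapP w - dirLapP w') (undLapP w) ε)
    (W : Finset V) :
    bilinApprox
      ((quotMat W)ᵀ * dirLapP w * quotMat W - (quotMat W)ᵀ * dirLapP w' * quotMat W)
      ((quotMat W)ᵀ * undLapP w * quotMat W) ε := by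
  intro x y
  have key : ∀ (A : Matrix V V ℝ) (x y : Option {v : V // v ∉ W} → ℝ),
      x ⬝ᵥ ((quotMat W)ᵀ * A * quotMat W).mulVec y
        = (quotMat W).mulVec x ⬝ᵥ A.mulVec ((quotMat W).mulVec y) := by
    intro A x y
    rw [← Matrix.mulVec_mulVec, ← Matrix.mulVec_mulVec, Matrix.dotProduct_mulVec,
      Matrix.vecMul_transpose]
  have hsub : (quotMat W)ᵀ * dirLapP w * quotMat W - (quotMat W)ᵀ * dirLapP w' * quotMat W
      = (quotMat W)ᵀ * (dirLapP w - dirLapP w') * quotMat W := by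
    rw [Matrix.mul_sub, Matrix.sub_mul]
  rw [hsub, key, key, key]
  exact happrox ((quotMat W).mulVec x) ((quotMat W).mulVec y)

end
end

section
/- Let G⃗ and H⃗ be weighted directed graphs on a finite vertex set V, and suppose H⃗ is a (β, ε)-directed cut approximation of G⃗ for some β ≥ 1 and ε ∈ (0, 1). Then the corresponding undirected graph und(H⃗) is a (√2·ε/√(β+1))-cut approximation of und(G⃗): for every nonempty proper subset U ⊊ V, (1 − √2·ε/√(β+1))·w_G(C) ≤ w_H(C) ≤ (1 + √2·ε/√(β+1))·w_G(C), where w_G(C) = w_{G⃗}(U, V∖U) + w_{G⃗}(V∖U, U) and w_H(C) = w_{H⃗}(U, V∖U) + w_{H⃗}(V∖U, U). -/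
open Matrix BigOperators

noncomputable section

/-- Weight of the directed cut from `U` to `V ∖ U`. -/
def dicutW {V : Type*} [Fintype V] [DecidableEq V] (w : V × V → ℝ) (U : Finset V) : ℝ :=
  ∑ p : V × V, if p.1 ∈ U ∧ p.2 ∉ U then w p else 0

/-- `H⃗` (with weights `wH`) is a `(β, ε)`-directed cut approximation of `G⃗` (weights `wG`). -/
def DicutApprox {V : Type*} [Fintype V] [DecidableEq V] (wG wH : V × V → ℝ)
    (β ε : ℝ) : Prop :=
  ∀ U : Finset V, U.Nonempty → U ≠ Finset.univ →
    |dicutW wH U - dicutW wG U|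
      ≤ ε / Real.sqrt (β + 1) *
        Real.sqrt (dicutW wG U * (dicutW wG U + dicutW wG Uᶜ))

/-- a dicut approximation yields an undirected cut approximation. -/
theorem stmt_14 {V : Type*} [Fintype V] [DecidableEq V]
    (wG wH : V × V → ℝ) (hwG : ∀ p, 0 ≤ wG p) (hwH : ∀ p, 0 ≤ wH p)
    (β ε : ℝ) (hβ : 1 ≤ β) (hε₀ : 0 < ε) (hε₁ : ε < 1)
    (happrox : DicutApprox wG wH β ε) :
    ∀ U : Finset V, U.Nonempty → U ≠ Finset.univ →
      (1 - Real.sqrt 2 * ε / Real.sqrt (β + 1)) * (dicutW wG U + dicutW wG Uᶜ)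
          ≤ dicutW wH U + dicutW wH Uᶜ ∧
      dicutW wH U + dicutW wH Uᶜ
          ≤ (1 + Real.sqrt 2 * ε / Real.sqrt (β + 1)) * (dicutW wG U + dicutW wG Uᶜ) := by
  intro U hU hU'
  have hcompl : (Uᶜ : Finset V)ᶜ = U := compl_compl U
  have hUc1 : (Uᶜ : Finset V).Nonempty := by
    rw [Finset.nonempty_iff_ne_empty]
    intro h
    apply hU'
    rw [← hcompl, h, Finset.compl_empty]
  have hUc2 : (Uᶜ : Finset V) ≠ Finset.univ := by
    intro h
    rw [← hcompl, h, Finset.compl_univ] at hU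
    exact Finset.not_nonempty_empty hU
  have h1 := happrox U hU hU'
  have h2 := happrox Uᶜ hUc1 hUc2
  rw [hcompl] at h2
  set a := dicutW wG U with ha
  set b := dicutW wG Uᶜ with hb
  have ha0 : 0 ≤ a := Finset.sum_nonneg fun p _ => by
    split; exacts [hwG p, le_rfl]
  have hb0 : 0 ≤ b := Finset.sum_nonneg fun p _ => by
    split; exacts [hwG p, le_rfl]
  set c := ε / Real.sqrt (β + 1) with hc
  have hc0 : 0 ≤ c := div_nonneg hε₀.le (Real.sqrt_nonneg _)
  have key : Real.sqrt (a * (a + b)) + Real.sqrt (b * (b + a))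
      ≤ Real.sqrt 2 * (a + b) := by
    rw [Real.sqrt_mul ha0, Real.sqrt_mul hb0, add_comm b a]
    rw [← add_mul]
    have hsum : Real.sqrt a + Real.sqrt b ≤ Real.sqrt 2 * Real.sqrt (a + b) := by
      have hsa := Real.sq_sqrt ha0
      have hsb := Real.sq_sqrt hb0
      have hsq : (Real.sqrt a + Real.sqrt b) ^ 2 ≤ 2 * (a + b) := by
        nlinarith [sq_nonneg (Real.sqrt a - Real.sqrt b)]
      calc Real.sqrt a + Real.sqrt b
          = Real.sqrt ((Real.sqrt a + Real.sqrt b) ^ 2) :=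
            (Real.sqrt_sq (by positivity)).symm
        _ ≤ Real.sqrt (2 * (a + b)) := Real.sqrt_le_sqrt hsq
        _ = Real.sqrt 2 * Real.sqrt (a + b) := Real.sqrt_mul (by norm_num) _
    calc (Real.sqrt a + Real.sqrt b) * Real.sqrt (a + b)
        ≤ (Real.sqrt 2 * Real.sqrt (a + b)) * Real.sqrt (a + b) :=
          mul_le_mul_of_nonneg_right hsum (Real.sqrt_nonneg _)
      _ = Real.sqrt 2 * (a + b) := by
          rw [mul_assoc, Real.mul_self_sqrt (by linarith)]
  have habs : |dicutW wH U + dicutW wH Uᶜ - (a + b)| ≤ Real.sqrt 2 * c * (a + b) := by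
    calc |dicutW wH U + dicutW wH Uᶜ - (a + b)|
        = |(dicutW wH U - a) + (dicutW wH Uᶜ - b)| := by ring_nf
      _ ≤ |dicutW wH U - a| + |dicutW wH Uᶜ - b| := abs_add_le _ _
      _ ≤ c * Real.sqrt (a * (a + b)) + c * Real.sqrt (b * (b + a)) := add_le_add h1 h2
      _ = c * (Real.sqrt (a * (a + b)) + Real.sqrt (b * (b + a))) := by ring
      _ ≤ c * (Real.sqrt 2 * (a + b)) := mul_le_mul_of_nonneg_left key hc0
      _ = Real.sqrt 2 * c * (a + b) := by ring
  rw [abs_le] at habs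
  have hrw : Real.sqrt 2 * ε / Real.sqrt (β + 1) = Real.sqrt 2 * c := by
    rw [hc, mul_div_assoc]
  constructor <;> rw [hrw] <;> nlinarith [habs.1, habs.2]


end
end
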